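/- arXiv:2110.01138 — 2 statements merged into one kernel-verified Lean document; each statement's English description precedes it below -/
import Mathlib

section
/- The category SD of all strong d-spaces (a full subcategory of Top₀) is not reflective in Top₀, i.e., the inclusion functor SD → Top₀ has no left adjoint. -/
open TopologicalSpace

/-- The b-topology associated with a topological space `(X, t)`: the topology with base
`{U ∩ cl({x}) : x ∈ U, U open}`. -/
def bTop (X : Type) (t : TopologicalSpace X) : TopologicalSpace X :=
  TopologicalSpace.generateFrom
    {s | ∃ (U : Set X) (x : X), @IsOpen X t U ∧ x ∈ U ∧ s = U ∩ @closure X t {x}}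

/-- The specialization order of `(X, t)`: `x ≤ y` iff `x ∈ cl({y})`. -/
def specLE {X : Type} (t : TopologicalSpace X) (x y : X) : Prop :=
  x ∈ @closure X t {y}

/-- The subspace topology on a subset. -/
def subTop {X : Type} (t : TopologicalSpace X) (A : Set X) : TopologicalSpace A :=
  TopologicalSpace.induced Subtype.val t

/-- A class of topological spaces, viewed as the object class of a full subcategory of Top. -/
abbrev SpaceClass : Type 1 := (X : Type) → TopologicalSpace X → Prop

/-- All members of `K` are T₀ (i.e. `K` is a subcategory of `Top₀`). -/
def AllT0 (K : SpaceClass) : Prop := ∀ X t, K X t → @T0Space X t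

/-- `K` is closed under homeomorphisms. -/
def ClosedUnderHomeo (K : SpaceClass) : Prop :=
  ∀ (X Y : Type) (tX : TopologicalSpace X) (tY : TopologicalSpace Y),
    K X tX → Nonempty (@Homeomorph X Y tX tY) → K Y tY

/-- `K ⊄ Top₁`: `K` contains a space that is not T₁. -/
def NotSubT1 (K : SpaceClass) : Prop := ∃ X t, K X t ∧ ¬ @T1Space X t

/-- `μ : X → Xk` is a K-reflection for `X`: `Xk ∈ K`, `μ` is continuous and every continuous map
from `X` to a member of `K` factors uniquely (continuously) through `μ`. -/
def IsReflection (K : SpaceClass) {X Xk : Type} (tX : TopologicalSpace X)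
    (tk : TopologicalSpace Xk) (μ : X → Xk) : Prop :=
  K Xk tk ∧ @Continuous X Xk tX tk μ ∧
    ∀ (Z : Type) (tZ : TopologicalSpace Z), K Z tZ →
      ∀ f : X → Z, @Continuous X Z tX tZ f →
        ∃! g : Xk → Z, @Continuous Xk Z tk tZ g ∧ g ∘ μ = f

/-- `K` is reflective in `Top₀`: every T₀ space admits a K-reflection. -/
def IsReflective (K : SpaceClass) : Prop :=
  ∀ (X : Type) (tX : TopologicalSpace X), @T0Space X tX →
    ∃ (Xk : Type) (tk : TopologicalSpace Xk) (μ : X → Xk), IsReflection K tX tk μ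

/-- `K` is b-closed-hereditary. -/
def BClosedHereditary (K : SpaceClass) : Prop :=
  ∀ (X : Type) (tX : TopologicalSpace X) (A : Set X),
    K X tX → @IsClosed X (bTop X tX) A → K A (subTop tX A)

/-- `K` is productive. -/
def Productive (K : SpaceClass) : Prop :=
  ∀ (I : Type) (X : I → Type) (t : ∀ i, TopologicalSpace (X i)),
    (∀ i, K (X i) (t i)) → K (∀ i, X i) (@Pi.topologicalSpace I X t)

/-- `K` has equalizers. -/
def HasEqualizers (K : SpaceClass) : Prop :=
  ∀ (X Y : Type) (tX : TopologicalSpace X) (tY : TopologicalSpace Y),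
    K X tX → K Y tY → ∀ f g : X → Y, @Continuous X Y tX tY f → @Continuous X Y tX tY g →
      K {x | f x = g x} (subTop tX {x | f x = g x})

/-- `(X, t)` is sober: T₀ and every irreducible closed set is the closure of a point. -/
def Sober (X : Type) (t : TopologicalSpace X) : Prop := @T0Space X t ∧ @QuasiSober X t

/-- A T₀ space is a strong d-space if for every point `x`, every (nonempty) directed set `D` in
the specialization order and every open `U`, `⋂_{d ∈ D} ↑d ∩ ↑x ⊆ U` implies
`↑d₀ ∩ ↑x ⊆ U` for some `d₀ ∈ D`. -/
def StrongD (X : Type) (t : TopologicalSpace X) : Prop :=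
  ∀ (x : X) (D : Set X) (U : Set X), D.Nonempty → DirectedOn (specLE t) D →
    @IsOpen X t U →
    (⋂ d ∈ D, {y | specLE t d y}) ∩ {y | specLE t x y} ⊆ U →
    ∃ d₀ ∈ D, {y | specLE t d₀ y} ∩ {y | specLE t x y} ⊆ U

/-- The full subcategory of strong d-spaces. -/
def StrongDClass : SpaceClass := fun X t => @T0Space X t ∧ StrongD X t


/-!
In a reflective full subcategory `K` of `Top₀`, the inclusion of an equalizer `E ⊆ X` of two
maps between members of `K` factors through the reflection unit `E → E_K`; uniqueness of
factorizations makes the factoring map land in `E` and invert the unit. So if `K` is closed under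
homeomorphisms, it is closed under equalizers.

Strong d-spaces are not. Let `Pt` be the poset with a chain `a₀ ≤ a₁ ≤ ⋯`, points `bₙ` with
`aₘ ≤ bₙ ↔ m ≤ n`, a point `c` below every `bₙ`, a point `w` above every `aₙ`, and `z` above `w`
and `c`; its open sets are the upper sets `O` such that `w ∈ O` forces some `aₘ ∈ O` and `z ∈ O`
forces a tail of the `bₙ` into `O`. Its specialization order is the given one. A directed set
without a greatest element is cofinal in the chain, and then the opens around `w` and `z` make
`Pt` a strong d-space. But `Pt ∖ {z}`, the equalizer of the indicators of the opens
`{z} ∪ {bₙ}` and `{bₙ}` into Sierpiński space, is not: there `⋂ ↑aₙ ∩ ↑c = ∅` although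
`bₙ ∈ ↑aₙ ∩ ↑c`.
-/

open Set Topology Function

section Specialization

variable {X Y : Type} [tX : TopologicalSpace X] [tY : TopologicalSpace Y]

theorem specLE_iff_specializes {x y : X} : specLE tX x y ↔ y ⤳ x :=
  specializes_iff_mem_closure.symm

theorem specLE_subtype_iff {A : Set X} {u v : A} :
    specLE (subTop tX A) u v ↔ specLE tX u v := by
  rw [specLE_iff_specializes, specLE_iff_specializes]
  exact subtype_specializes_iff _ _

theorem specLE_homeomorph_iff (φ : X ≃ₜ Y) {x y : X} :
    specLE tY (φ x) (φ y) ↔ specLE tX x y := by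
  rw [specLE_iff_specializes, specLE_iff_specializes]
  exact φ.isInducing.specializes_iff

theorem t0Space_of_specLE_iff [PartialOrder X] (h : ∀ x y : X, specLE tX x y ↔ x ≤ y) :
    T0Space X :=
  (t0Space_iff_inseparable X).2 fun x y hxy =>
    le_antisymm ((h x y).1 (specLE_iff_specializes.2 hxy.specializes'))
      ((h y x).1 (specLE_iff_specializes.2 hxy.specializes))

theorem strongD_iff_of_specLE_iff [Preorder X] (h : ∀ x y : X, specLE tX x y ↔ x ≤ y) :
    StrongD X tX ↔ ∀ (x : X) (D U : Set X), D.Nonempty → DirectedOn (· ≤ ·) D → IsOpen U →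
      upperBounds D ∩ Ici x ⊆ U → ∃ d ∈ D, Ici d ∩ Ici x ⊆ U := by
  have hle : specLE tX = (· ≤ ·) := funext₂ fun x y => propext (h x y)
  have hub : ∀ D : Set X, ⋂ d ∈ D, {y | d ≤ y} = upperBounds D := fun D => by
    ext; simp [upperBounds]
  simp only [StrongD, hle, hub]
  rfl

theorem StrongD.of_homeomorph (φ : X ≃ₜ Y) (h : StrongD X tX) : StrongD Y tY := by
  have hspec : ∀ p x, specLE tY p (φ x) ↔ specLE tX (φ.symm p) x := fun p x => by
    rw [← specLE_homeomorph_iff φ, φ.apply_symm_apply]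
  intro y D U hne hdir hU hsub
  have hdir' : DirectedOn (specLE tX) (φ.symm '' D) :=
    directedOn_image.2 <| hdir.mono fun p q hpq => (hspec p _).1 (by rwa [φ.apply_symm_apply])
  have hsub' : (⋂ d ∈ φ.symm '' D, {x | specLE tX d x}) ∩ {x | specLE tX (φ.symm y) x} ⊆
      φ ⁻¹' U := by
    rintro x ⟨hDx, hyx⟩
    exact hsub ⟨mem_iInter₂.2 fun d hd =>
      (hspec d x).2 (mem_iInter₂.1 hDx _ (mem_image_of_mem _ hd)), (hspec y x).2 hyx⟩
  obtain ⟨_, ⟨d, hd, rfl⟩, hd₀⟩ :=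
    h (φ.symm y) (φ.symm '' D) (φ ⁻¹' U) (hne.image _) hdir' (hU.preimage φ.continuous) hsub'
  refine ⟨d, hd, fun y' ⟨hdy', hyy'⟩ => ?_⟩
  rw [← φ.apply_symm_apply y'] at hdy' hyy' ⊢
  exact hd₀ ⟨(hspec d _).1 hdy', (hspec y _).1 hyy'⟩

end Specialization

section Reflection

variable {K : SpaceClass} {X Xk : Type} [tX : TopologicalSpace X] [tk : TopologicalSpace Xk]
  {μ : X → Xk}

theorem IsReflection.hom_ext (hμ : IsReflection K tX tk μ) {Z : Type} [tZ : TopologicalSpace Z]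
    (hZ : K Z tZ) {g₁ g₂ : Xk → Z} (hg₁ : Continuous g₁) (hg₂ : Continuous g₂)
    (h : g₁ ∘ μ = g₂ ∘ μ) : g₁ = g₂ :=
  (hμ.2.2 Z tZ hZ (g₂ ∘ μ) (hg₂.comp hμ.2.1)).unique ⟨hg₁, h⟩ ⟨hg₂, rfl⟩

theorem IsReflection.mem_of_leftInverse (hK : ClosedUnderHomeo K) (hμ : IsReflection K tX tk μ)
    {r : Xk → X} (hr : Continuous r) (hrμ : LeftInverse r μ) : K X tX := by
  have hμr : μ ∘ r = id :=
    hμ.hom_ext hμ.1 (hμ.2.1.comp hr) continuous_id (funext fun x => congrArg μ (hrμ x))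
  exact hK Xk X tk tX hμ.1 ⟨⟨⟨r, μ, congrFun hμr, hrμ⟩, hr, hμ.2.1⟩⟩

theorem IsReflective.hasEqualizers (hK : IsReflective K) (hT0 : AllT0 K)
    (hhomeo : ClosedUnderHomeo K) : HasEqualizers K := by
  intro X Y tX tY hX hY f g hf hg
  have := hT0 X tX hX
  obtain ⟨Ek, tk, ν, hν⟩ := hK _ (subTop tX {x | f x = g x}) Subtype.t0Space
  obtain ⟨h, ⟨hh, hhν⟩, -⟩ := hν.2.2 X tX hX Subtype.val continuous_subtype_val
  have hfg : f ∘ h = g ∘ h := hν.hom_ext hY (hf.comp hh) (hg.comp hh) <| by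
    rw [comp_assoc, hhν, comp_assoc, hhν]
    exact funext fun e => e.2
  exact hν.mem_of_leftInverse hhomeo (hh.subtype_mk (congrFun hfg))
    fun e => Subtype.ext (congrFun hhν e)

end Reflection

theorem strongDClass_closedUnderHomeo : ClosedUnderHomeo StrongDClass :=
  fun _ _ _ _ ⟨_, hX⟩ ⟨φ⟩ => ⟨φ.symm.isEmbedding.t0Space, hX.of_homeomorph φ⟩

theorem specLE_prop_iff (p q : Prop) : specLE sierpinskiSpace p q ↔ p ≤ q := by
  rw [specLE, IsUpper.closure_singleton]
  rfl

theorem strongD_prop : StrongD Prop sierpinskiSpace := by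
  rw [strongD_iff_of_specLE_iff specLE_prop_iff]
  intro x D U hne _ _ hsub
  have hD : IsGreatest D (sSup D) := ⟨hne.csSup_mem D.toFinite, fun _ hd => le_sSup hd⟩
  exact ⟨sSup D, hD.1, hD.isLUB.upperBounds_eq ▸ hsub⟩

inductive Pt : Type
  | a (n : ℕ)
  | b (n : ℕ)
  | c
  | w
  | z

namespace Pt

def le : Pt → Pt → Prop
  | a n, a m | a n, b m => n ≤ m
  | a _, w | a _, z => True
  | b n, b m => n = m
  | c, b _ | c, c | c, z => True
  | w, w | w, z => True
  | z, z => True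
  | _, _ => False

instance : PartialOrder Pt where
  le := le
  le_refl p := by cases p <;> simp [le]
  le_trans p q r := by cases p <;> cases q <;> cases r <;> simp [le] <;> omega
  le_antisymm p q := by cases p <;> cases q <;> simp [le] <;> omega

theorem le_def {p q : Pt} : p ≤ q ↔ le p q := Iff.rfl

theorem a_le_a {n m : ℕ} : a n ≤ a m ↔ n ≤ m := Iff.rfl

structure IsOpenSet (O : Set Pt) : Prop where
  isUpperSet : IsUpperSet O
  exists_a_mem : w ∈ O → ∃ m, a m ∈ O
  exists_forall_b_mem : z ∈ O → ∃ m, ∀ k, m ≤ k → b k ∈ O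

instance : TopologicalSpace Pt where
  IsOpen := IsOpenSet
  isOpen_univ := ⟨isUpperSet_univ, fun _ => ⟨0, trivial⟩, fun _ => ⟨0, fun _ _ => trivial⟩⟩
  isOpen_inter O₁ O₂ h₁ h₂ := by
    refine ⟨h₁.isUpperSet.inter h₂.isUpperSet, fun hw => ?_, fun hz => ?_⟩
    · obtain ⟨m₁, hm₁⟩ := h₁.exists_a_mem hw.1
      obtain ⟨m₂, hm₂⟩ := h₂.exists_a_mem hw.2
      exact ⟨max m₁ m₂, h₁.isUpperSet (a_le_a.2 (le_max_left _ _)) hm₁,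
        h₂.isUpperSet (a_le_a.2 (le_max_right _ _)) hm₂⟩
    · obtain ⟨m₁, hm₁⟩ := h₁.exists_forall_b_mem hz.1
      obtain ⟨m₂, hm₂⟩ := h₂.exists_forall_b_mem hz.2
      exact ⟨max m₁ m₂, fun k hk => ⟨hm₁ k (le_of_max_le_left hk), hm₂ k (le_of_max_le_right hk)⟩⟩
  isOpen_sUnion S hS := by
    refine ⟨isUpperSet_sUnion fun O hO => (hS O hO).isUpperSet, ?_, ?_⟩
    · rintro ⟨O, hO, hw⟩
      obtain ⟨m, hm⟩ := (hS O hO).exists_a_mem hw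
      exact ⟨m, O, hO, hm⟩
    · rintro ⟨O, hO, hz⟩
      obtain ⟨m, hm⟩ := (hS O hO).exists_forall_b_mem hz
      exact ⟨m, fun k hk => ⟨O, hO, hm k hk⟩⟩

theorem isOpen_iff {O : Set Pt} : IsOpen O ↔ IsOpenSet O := Iff.rfl

theorem isOpen_Ici_a (n : ℕ) : IsOpen (Ici (a n)) :=
  ⟨isUpperSet_Ici _, fun _ => ⟨n, mem_Ici.2 le_rfl⟩,
    fun _ => ⟨n, fun k hk => by simpa [le_def, le] using hk⟩⟩

theorem isOpen_Ici_c : IsOpen (Ici c) :=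
  ⟨isUpperSet_Ici _, fun h => by simp [le_def, le] at h,
    fun _ => ⟨0, fun _ _ => by simp [le_def, le]⟩⟩

theorem isOpen_image_b (s : Set ℕ) : IsOpen (b '' s) := by
  refine ⟨fun p q hpq hp => ?_, fun h => by simp at h, fun h => by simp at h⟩
  obtain ⟨n, hn, rfl⟩ := hp
  cases q <;> simp_all [le_def, le]

def zNhd (m : ℕ) : Set Pt := insert z (b '' Ici m)

theorem isOpen_zNhd (m : ℕ) : IsOpen (zNhd m) := by
  refine ⟨?_, fun h => by simp [zNhd] at h, fun _ => ⟨m, fun k hk => Or.inr ⟨k, hk, rfl⟩⟩⟩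
  rintro p q hpq (rfl | ⟨n, hn, rfl⟩) <;> cases q <;> simp_all [le_def, le, zNhd]

theorem le_of_forall_isOpen {p q : Pt} (h : ∀ O, IsOpen O → p ∈ O → q ∈ O) : p ≤ q := by
  cases p with
  | a n => exact h _ (isOpen_Ici_a n) (mem_Ici.2 le_rfl)
  | b n => exact (h _ (isOpen_image_b {n}) ⟨n, rfl, rfl⟩).elim fun _ ⟨hn, hq⟩ => by simp_all
  | c => exact h _ isOpen_Ici_c (mem_Ici.2 le_rfl)
  | w =>
    have hw : ∀ m, a m ≤ q := fun m => h _ (isOpen_Ici_a m) (by simp [le_def, le])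
    cases q with
    | a k | b k => simpa [le_def, le] using hw (k + 1)
    | c => simpa [le_def, le] using hw 0
    | w | z => simp [le_def, le]
  | z =>
    have hz : ∀ m, q ∈ zNhd m := fun m => h _ (isOpen_zNhd m) (mem_insert _ _)
    cases q with
    | b k => simpa [zNhd] using hz (k + 1)
    | z => exact le_rfl
    | _ => simpa [zNhd] using hz 0

theorem specLE_iff_le (p q : Pt) : specLE inferInstance p q ↔ p ≤ q := by
  rw [specLE_iff_specializes, specializes_iff_forall_open]
  exact ⟨le_of_forall_isOpen, fun hpq O hO hp => (isOpen_iff.1 hO).isUpperSet hpq hp⟩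

instance : T0Space Pt := t0Space_of_specLE_iff specLE_iff_le

theorem isGreatest_or_cofinal {D : Set Pt} (hne : D.Nonempty) (hdir : DirectedOn (· ≤ ·) D) :
    (∃ M, IsGreatest D M) ∨ ((∀ d ∈ D, d ≤ w) ∧ ∀ n, ∃ k, n ≤ k ∧ a k ∈ D) := by
  have of_maximal : ∀ M ∈ D, (∀ u ∈ D, M ≤ u → u = M) → ∃ M, IsGreatest D M :=
    fun M hM hmax => ⟨M, hM, fun d hd => by
      obtain ⟨u, hu, hdu, hMu⟩ := hdir d hd M hM
      exact hmax u hu hMu ▸ hdu⟩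
  by_cases hz : z ∈ D
  · exact .inl <| of_maximal z hz fun u _ h => by cases u <;> simp_all [le_def, le]
  by_cases hb : ∃ m, b m ∈ D
  · obtain ⟨m, hm⟩ := hb
    exact .inl <| of_maximal _ hm fun u _ h => by cases u <;> simp_all [le_def, le]
  by_cases hw : w ∈ D
  · exact .inl <| of_maximal w hw fun u _ h => by cases u <;> simp_all [le_def, le]
  by_cases hc : c ∈ D
  · exact .inl <| of_maximal c hc fun u _ h => by cases u <;> simp_all [le_def, le]
  have hDa : ∀ d ∈ D, ∃ n, d = a n := fun d hd => by
    cases d <;> simp_all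
  by_cases hbdd : BddAbove (a ⁻¹' D)
  · obtain ⟨d, hd⟩ := hne
    obtain ⟨n, rfl⟩ := hDa d hd
    refine .inl ⟨a (sSup (a ⁻¹' D)), Nat.sSup_mem ⟨n, hd⟩ hbdd, fun d hd => ?_⟩
    obtain ⟨k, rfl⟩ := hDa d hd
    exact a_le_a.2 (le_csSup hbdd hd)
  · refine .inr ⟨fun d hd => ?_, fun n => ?_⟩
    · obtain ⟨k, rfl⟩ := hDa d hd
      simp [le_def, le]
    · obtain ⟨k, hk, hnk⟩ := not_bddAbove_iff.1 hbdd n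
      exact ⟨k, hnk.le, hk⟩

theorem strongD : StrongD Pt inferInstance := by
  rw [strongD_iff_of_specLE_iff specLE_iff_le]
  intro x D U hne hdir hU hsub
  obtain ⟨M, hM⟩ | ⟨hDw, hcof⟩ := isGreatest_or_cofinal hne hdir
  · exact ⟨M, hM.1, hM.isLUB.upperBounds_eq ▸ hsub⟩
  have hwD : w ∈ upperBounds D := hDw
  have hzD : z ∈ upperBounds D := fun d hd => (hDw d hd).trans (by simp [le_def, le])
  rw [isOpen_iff] at hU
  by_cases hxw : x ≤ w
  · obtain ⟨m, hm⟩ := hU.exists_a_mem (hsub ⟨hwD, hxw⟩)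
    obtain ⟨k, hmk, hk⟩ := hcof m
    exact ⟨a k, hk, fun y hy => hU.isUpperSet ((a_le_a.2 hmk).trans hy.1) hm⟩
  cases x with
  | a n | w => simp [le_def, le] at hxw
  | c =>
    have hzU : z ∈ U := hsub ⟨hzD, by simp [le_def, le]⟩
    obtain ⟨m, hm⟩ := hU.exists_forall_b_mem hzU
    obtain ⟨k, hmk, hk⟩ := hcof m
    refine ⟨a k, hk, fun y ⟨hky, hcy⟩ => ?_⟩
    cases y <;> simp [le_def, le] at hky hcy
    · exact hm _ (hmk.trans hky)
    · exact hzU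
  | z =>
    obtain ⟨d, hd⟩ := hne
    refine ⟨d, hd, fun y ⟨_, hzy⟩ => ?_⟩
    cases y <;> simp [le_def, le] at hzy
    exact hsub ⟨hzD, mem_Ici.2 le_rfl⟩
  | b n =>
    obtain ⟨k, hnk, hk⟩ := hcof (n + 1)
    refine ⟨a k, hk, fun y ⟨hky, hby⟩ => ?_⟩
    cases y <;> simp [le_def, le] at hky hby
    omega

theorem not_strongD_equalizer :
    ¬ StrongD {p : Pt | (p ∈ zNhd 0) = (p ∈ range b)}
      (subTop inferInstance {p : Pt | (p ∈ zNhd 0) = (p ∈ range b)}) := by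
  set E := {p : Pt | (p ∈ zNhd 0) = (p ∈ range b)}
  have hE : ∀ p, p ∈ E ↔ p ≠ z := fun p => by cases p <;> simp [E, zNhd]
  rw [strongD_iff_of_specLE_iff (tX := subTop _ E)
    fun u v => specLE_subtype_iff.trans (specLE_iff_le _ _)]
  intro h
  let ι : ℕ → E := fun n => ⟨a n, (hE _).2 (by simp)⟩
  let x : E := ⟨c, (hE c).2 (by simp)⟩
  have hι : Monotone ι := fun _ _ hnm => a_le_a.2 hnm
  have hempty : upperBounds (range ι) ∩ Ici x ⊆ ∅ := by
    rintro ⟨y, hy⟩ ⟨hyD, hcy⟩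
    have hay : ∀ n, a n ≤ y := fun n => hyD ⟨n, rfl⟩
    replace hcy : c ≤ y := hcy
    cases y with
    | a k | b k => simpa [le_def, le] using hay (k + 1)
    | c => simpa [le_def, le] using hay 0
    | w => simp [le_def, le] at hcy
    | z => exact (hE z).1 hy rfl
  obtain ⟨_, ⟨k, rfl⟩, hk⟩ := h x (range ι) ∅ (range_nonempty ι)
    (directedOn_range.2 hι.directed_le) isOpen_empty hempty
  exact hk (a := ⟨b k, (hE _).2 (by simp)⟩)
    ⟨show a k ≤ b k from le_def.2 (le_refl k), show c ≤ b k from trivial⟩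

end Pt

theorem not_hasEqualizers_strongDClass : ¬ HasEqualizers StrongDClass := fun h =>
  Pt.not_strongD_equalizer (h Pt Prop _ _ ⟨inferInstance, Pt.strongD⟩
    ⟨inferInstance, strongD_prop⟩ (· ∈ Pt.zNhd 0) (· ∈ range Pt.b)
    (continuous_Prop.2 (Pt.isOpen_zNhd 0))
    (continuous_Prop.2 (image_univ ▸ Pt.isOpen_image_b univ))).2

/-- the category of strong d-spaces is not reflective in Top₀. -/
theorem statement17 : ¬ IsReflective StrongDClass := fun h =>
  not_hasEqualizers_strongDClass
    (h.hasEqualizers (fun _ _ hX => hX.1) strongDClass_closedUnderHomeo)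
end

section
/- The category OWF of all open well-filtered spaces (a full subcategory of Top₀) is not reflective in Top₀, i.e., the inclusion functor OWF → Top₀ has no left adjoint. -/
open TopologicalSpace

/-- `U` is way below `V` in the lattice of open sets of `(X, t)`: whenever `V` is contained in
the union of a (nonempty) directed family of open sets, `U` is contained in some member. -/
def WayBelowOpen {X : Type} (t : TopologicalSpace X) (U V : Set X) : Prop :=
  ∀ D : Set (Set X), D.Nonempty → (∀ W ∈ D, @IsOpen X t W) → DirectedOn (· ⊆ ·) D →
    V ⊆ ⋃₀ D → ∃ W ∈ D, U ⊆ W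

/-- A T₀ space is open well-filtered if for every (nonempty) `≪`-filtered family `F` of open
sets and every open `U`, `⋂F ⊆ U` implies `V ⊆ U` for some `V ∈ F`. -/
def OpenWellFiltered (X : Type) (t : TopologicalSpace X) : Prop :=
  ∀ F : Set (Set X), F.Nonempty → (∀ U ∈ F, @IsOpen X t U) →
    (∀ U₁ ∈ F, ∀ U₂ ∈ F, ∃ U₃ ∈ F, WayBelowOpen t U₃ U₁ ∧ WayBelowOpen t U₃ U₂) →
    ∀ U : Set X, @IsOpen X t U → ⋂₀ F ⊆ U → ∃ V ∈ F, V ⊆ U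

/-- The full subcategory of open well-filtered spaces. -/
def OWFClass : SpaceClass := fun X t => @T0Space X t ∧ OpenWellFiltered X t


/-!
Let `μ : X → R` be a reflection of `X`, the natural numbers with the cofinite topology, into open
well-filtered spaces. Maps into Sierpinski space (which is open well-filtered, being finite) detect
open sets, so `V ↦ μ ⁻¹' V` is an order embedding of the open sets of `R` into those of `X`. In `X`
every set is compact and any two nonempty open sets meet; hence the nonempty open sets of `R` form
a `≪`-filtered family, and open well-filteredness yields a point `z ∈ R` lying in every nonempty
open set. Johnstone's space is open well-filtered because no nonempty open set in it is way below
another. The extension `g : R → J` of `n ↦ (n, ω)` sends `z` into every open set containing some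
`(n, ω)`, which fails for the complement of `↓ g z`.
-/

open Set

theorem WayBelowOpen.subset {X : Type} [TopologicalSpace X] {U V : Set X}
    (h : WayBelowOpen ‹_› U V) (hV : IsOpen V) : U ⊆ V := by
  obtain ⟨W, rfl, hUW⟩ := h {V} (singleton_nonempty V) (by simpa using hV)
    (directedOn_singleton V) (by simp)
  exact hUW

theorem openWellFiltered_of_finite (X : Type) [TopologicalSpace X] [Finite X] :
    OpenWellFiltered X ‹_› := by
  intro F hF hFo hfil U _ hFU
  have : Nonempty F := hF.to_subtype
  have hdir : Directed (· ⊇ ·) ((↑) : F → Set X) := fun V₁ V₂ => by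
    obtain ⟨V₃, hV₃, h₁, h₂⟩ := hfil V₁ V₁.2 V₂ V₂.2
    exact ⟨⟨V₃, hV₃⟩, h₁.subset (hFo _ V₁.2), h₂.subset (hFo _ V₂.2)⟩
  obtain ⟨⟨V, hV⟩, hVmin⟩ := hdir.finite_set_le (finite_univ (α := F))
  exact ⟨V, hV, fun x hx => hFU (mem_sInter.2 fun W hW => hVmin ⟨W, hW⟩ trivial hx)⟩

theorem sierpinski_mem_OWFClass : OWFClass Prop inferInstance :=
  ⟨inferInstance, openWellFiltered_of_finite Prop⟩

section Reflection

variable {X R : Type} [TopologicalSpace X] [TopologicalSpace R] {μ : X → R}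

theorem IsReflection.preimage_injOn (h : IsReflection OWFClass ‹_› ‹_› μ) {V W : Set R}
    (hV : IsOpen V) (hW : IsOpen W) (hVW : μ ⁻¹' V = μ ⁻¹' W) : V = W := by
  have hext : (· ∈ V) = (· ∈ W) :=
    (h.2.2 Prop _ sierpinski_mem_OWFClass (· ∈ μ ⁻¹' V)
      (continuous_Prop.2 (hV.preimage h.2.1))).unique
      ⟨continuous_Prop.2 hV, rfl⟩ ⟨continuous_Prop.2 hW, by rw [hVW]; rfl⟩
  exact Set.ext fun x => iff_of_eq (congrFun hext x)

theorem IsReflection.subset_of_preimage_subset (h : IsReflection OWFClass ‹_› ‹_› μ)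
    {V W : Set R} (hV : IsOpen V) (hW : IsOpen W) (hVW : μ ⁻¹' V ⊆ μ ⁻¹' W) : V ⊆ W :=
  inter_eq_left.1 <| h.preimage_injOn (hV.inter hW) hV <| by
    rw [preimage_inter, inter_eq_left.2 hVW]

theorem wayBelowOpen_of_isCompact_preimage (hμ : Continuous μ)
    (hle : ∀ V W : Set R, IsOpen V → IsOpen W → μ ⁻¹' V ⊆ μ ⁻¹' W → V ⊆ W)
    {U V : Set R} (hU : IsOpen U) (hc : IsCompact (μ ⁻¹' U)) (hUV : U ⊆ V) :
    WayBelowOpen ‹_› U V := by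
  intro D hD hDo hdir hVD
  have : Nonempty D := hD.to_subtype
  obtain ⟨⟨W, hW⟩, hUW⟩ := hc.elim_directed_cover (fun W : D => μ ⁻¹' W)
    (fun W => (hDo W W.2).preimage hμ)
    (fun x hx => by
      obtain ⟨W, hW, hxW⟩ := hVD (hUV hx)
      exact mem_iUnion.2 ⟨⟨W, hW⟩, hxW⟩)
    (hdir.directed_val.mono_comp (g := preimage μ) _ fun _ _ => preimage_mono)
  exact ⟨W, hW, hle U W hU (hDo W hW) hUW⟩

theorem IsReflection.exists_forall_mem [IrreducibleSpace X] [NoetherianSpace X]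
    (h : IsReflection OWFClass ‹_› ‹_› μ) :
    ∃ z : R, ∀ V, IsOpen V → V.Nonempty → z ∈ V := by
  have hle : ∀ V W : Set R, IsOpen V → IsOpen W → μ ⁻¹' V ⊆ μ ⁻¹' W → V ⊆ W :=
    fun _ _ => h.subset_of_preimage_subset
  have hne : ∀ V : Set R, IsOpen V → V.Nonempty → (μ ⁻¹' V).Nonempty := fun V hV hVne =>
    nonempty_iff_ne_empty.2 fun h₀ =>
      hVne.ne_empty (subset_empty_iff.1 (hle V ∅ hV isOpen_empty (by simp [h₀])))
  set F : Set (Set R) := {V | IsOpen V ∧ V.Nonempty}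
  have hfil : ∀ V₁ ∈ F, ∀ V₂ ∈ F, ∃ V₃ ∈ F,
      WayBelowOpen ‹_› V₃ V₁ ∧ WayBelowOpen ‹_› V₃ V₂ := by
    rintro V₁ ⟨hV₁, hV₁ne⟩ V₂ ⟨hV₂, hV₂ne⟩
    have hV₃ : IsOpen (V₁ ∩ V₂) := hV₁.inter hV₂
    have hwb : ∀ V, V₁ ∩ V₂ ⊆ V → WayBelowOpen ‹_› (V₁ ∩ V₂) V := fun _ =>
      wayBelowOpen_of_isCompact_preimage h.2.1 hle hV₃ (NoetherianSpace.isCompact _)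
    refine ⟨V₁ ∩ V₂, ⟨hV₃, ?_⟩, hwb V₁ inter_subset_left, hwb V₂ inter_subset_right⟩
    obtain ⟨x, hx⟩ := nonempty_preirreducible_inter (hV₁.preimage h.2.1) (hV₂.preimage h.2.1)
      (hne V₁ hV₁ hV₁ne) (hne V₂ hV₂ hV₂ne)
    exact ⟨μ x, hx⟩
  obtain ⟨z, hz⟩ : (⋂₀ F).Nonempty := by
    refine nonempty_iff_ne_empty.2 fun hF₀ => ?_
    obtain ⟨V, ⟨-, hVne⟩, hV⟩ := h.1.2 F ⟨univ, isOpen_univ, μ (Classical.arbitrary X), trivial⟩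
      (fun _ hV => hV.1) hfil ∅ isOpen_empty hF₀.subset
    exact hVne.ne_empty (subset_empty_iff.1 hV)
  exact ⟨z, fun V hV hVne => hz V ⟨hV, hVne⟩⟩

end Reflection

/-- Johnstone's dcpo: `fin m k` is the point `(m, k)` and `top m` is the point `(m, ω)`. -/
inductive Johnstone : Type
  | fin (m k : ℕ)
  | top (m : ℕ)

namespace Johnstone

protected def le : Johnstone → Johnstone → Prop
  | fin m k, fin m' k' => m = m' ∧ k ≤ k'
  | fin m k, top m' => m = m' ∨ k ≤ m'
  | top m, top m' => m = m'
  | top _, fin _ _ => False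

instance : PartialOrder Johnstone where
  le := Johnstone.le
  le_refl x := by cases x <;> simp [Johnstone.le]
  le_trans := by
    rintro (_ | _) (_ | _) (_ | _) h₁ h₂ <;> simp only [Johnstone.le] at h₁ h₂ ⊢ <;> omega
  le_antisymm := by
    rintro (_ | _) (_ | _) h₁ h₂ <;> simp only [Johnstone.le] at h₁ h₂ <;> grind

@[simp] theorem fin_le_fin {m k m' k' : ℕ} : fin m k ≤ fin m' k' ↔ m = m' ∧ k ≤ k' := Iff.rfl

@[simp] theorem fin_le_top {m k m' : ℕ} : fin m k ≤ top m' ↔ m = m' ∨ k ≤ m' := Iff.rfl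

@[simp] theorem top_le_top {m m' : ℕ} : top m ≤ top m' ↔ m = m' := Iff.rfl

@[simp] theorem not_top_le_fin {m m' k' : ℕ} : ¬ top m ≤ fin m' k' := id

/-- The Scott-open sets: the only directed sets without a maximum are the columns
`{fin m k | k ∈ ℕ}`, with supremum `top m`. -/
def IsScottOpen (V : Set Johnstone) : Prop :=
  IsUpperSet V ∧ ∀ m, top m ∈ V → ∃ k, fin m k ∈ V

instance : TopologicalSpace Johnstone where
  IsOpen := IsScottOpen
  isOpen_univ := ⟨isUpperSet_univ, fun _ _ => ⟨0, trivial⟩⟩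
  isOpen_inter U V hU hV := by
    refine ⟨hU.1.inter hV.1, fun m hm => ?_⟩
    obtain ⟨k₁, hk₁⟩ := hU.2 m hm.1
    obtain ⟨k₂, hk₂⟩ := hV.2 m hm.2
    exact ⟨max k₁ k₂, hU.1 (by simp) hk₁, hV.1 (by simp) hk₂⟩
  isOpen_sUnion S hS := by
    refine ⟨isUpperSet_sUnion fun V hV => (hS V hV).1, ?_⟩
    rintro m ⟨V, hVS, hmV⟩
    obtain ⟨k, hk⟩ := (hS V hVS).2 m hmV
    exact ⟨k, V, hVS, hk⟩

theorem isOpen_iff {V : Set Johnstone} :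
    IsOpen V ↔ IsUpperSet V ∧ ∀ m, top m ∈ V → ∃ k, fin m k ∈ V := Iff.rfl

theorem isOpen_compl_Iic (p : Johnstone) : IsOpen (Iic p)ᶜ := by
  refine isOpen_iff.2 ⟨(isLowerSet_Iic p).compl, fun m hm => ?_⟩
  cases p with
  | fin m' k' => exact ⟨k' + 1, by simp⟩
  | top m' => exact ⟨m' + 1, by simp_all⟩

instance : T0Space Johnstone :=
  (t0Space_iff_inseparable _).2 fun x y hxy => le_antisymm
    (not_not.1 fun hx => (hxy.mem_open_iff (isOpen_compl_Iic y)).1 hx self_mem_Iic)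
    (not_not.1 fun hy => (hxy.mem_open_iff (isOpen_compl_Iic x)).2 hy self_mem_Iic)

theorem exists_top_not_le (p : Johnstone) : ∃ n, ¬ top n ≤ p := by
  cases p with
  | fin m k => exact ⟨0, not_top_le_fin⟩
  | top m => exact ⟨m + 1, by simp⟩

theorem continuous_top : Continuous (top ∘ (CofiniteTopology.of (X := ℕ)).symm) := by
  refine continuous_def.2 fun V hV => CofiniteTopology.isOpen_iff.2 fun ⟨n, hn⟩ => ?_
  obtain ⟨k, hk⟩ := (isOpen_iff.1 hV).2 _ hn
  refine ((finite_Iio k).image CofiniteTopology.of).subset fun n' hn' =>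
    ⟨CofiniteTopology.of.symm n', ?_, by simp⟩
  by_contra hkn
  exact hn' ((isOpen_iff.1 hV).1 (fin_le_top.2 (Or.inr (not_lt.1 hkn))) hk)

/-- The members of the directed family witnessing that `U` is not way below any open set: in
each column `m > n` meeting `U`, only the points strictly above the least point of `U` are kept. -/
def Trim (U : Set Johnstone) (n : ℕ) : Johnstone → Prop
  | fin m k => m ≤ n ∨ (∃ j < k, fin m j ∈ U) ∨ ∀ j, fin m j ∉ U
  | top _ => True

theorem isOpen_inter_trim {U V : Set Johnstone} (hV : IsOpen V) (n : ℕ) :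
    IsOpen (V ∩ {x | Trim U n x}) := by
  classical
  refine isOpen_iff.2 ⟨(isOpen_iff.1 hV).1.inter ?_, fun m ⟨hmV, _⟩ => ?_⟩
  · rintro (⟨m, k⟩ | m) (⟨m', k'⟩ | m') hxy hx
    · obtain ⟨rfl, hkk'⟩ := fin_le_fin.1 hxy
      exact Or.imp_right (Or.imp_left fun ⟨j, hj, hjU⟩ => ⟨j, hj.trans_le hkk', hjU⟩) hx
    all_goals trivial
  obtain ⟨k, hk⟩ := (isOpen_iff.1 hV).2 m hmV
  by_cases hU : ∃ j, fin m j ∈ U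
  · obtain ⟨j, hj⟩ := hU
    exact ⟨max k (j + 1), (isOpen_iff.1 hV).1 (by simp) hk,
      Or.inr (Or.inl ⟨j, by omega, hj⟩)⟩
  · exact ⟨k, hk, Or.inr (Or.inr (not_exists.1 hU))⟩

theorem not_wayBelowOpen {U V : Set Johnstone} (hU : IsOpen U) (hUne : U.Nonempty)
    (hV : IsOpen V) : ¬ WayBelowOpen inferInstance U V := by
  classical
  intro hUV
  have hmono : Monotone fun n => V ∩ {x | Trim U n x} := by
    intro n n' hnn'
    rintro (⟨m, k⟩ | m) ⟨hxV, hx⟩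
    exacts [⟨hxV, hx.imp_left (le_trans · hnn')⟩, ⟨hxV, trivial⟩]
  obtain ⟨_, ⟨n, rfl⟩, hUW⟩ := hUV (range fun n => V ∩ {x | Trim U n x}) (range_nonempty _)
    (forall_mem_range.2 fun n => isOpen_inter_trim hV n) (directedOn_range.2 hmono.directed_le)
    (by
      rintro (⟨m, k⟩ | m) hx
      exacts [⟨_, ⟨m, rfl⟩, hx, Or.inl le_rfl⟩, ⟨_, ⟨0, rfl⟩, hx, trivial⟩])
  obtain ⟨a, b, hab⟩ : ∃ a b, fin a b ∈ U := by
    obtain ⟨⟨a, b⟩ | m, hx⟩ := hUne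
    · exact ⟨a, b, hx⟩
    · exact ⟨m, (isOpen_iff.1 hU).2 m hx⟩
  have hm : n < max b (n + 1) := by omega
  have hex : ∃ k, fin (max b (n + 1)) k ∈ U :=
    (isOpen_iff.1 hU).2 _ ((isOpen_iff.1 hU).1 (fin_le_top.2 (Or.inr (le_max_left _ _))) hab)
  rcases (hUW (Nat.find_spec hex)).2 with hmn | ⟨j, hj, hjU⟩ | hno
  · omega
  · exact Nat.find_min hex hj hjU
  · exact hno _ (Nat.find_spec hex)

theorem openWellFiltered : OpenWellFiltered Johnstone inferInstance := by
  rintro F ⟨U₁, hU₁⟩ hFo hfil U - -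
  obtain ⟨U₃, hU₃, hwb, -⟩ := hfil U₁ hU₁ U₁ hU₁
  obtain rfl : U₃ = ∅ := not_nonempty_iff_eq_empty.1 fun hne =>
    not_wayBelowOpen (hFo U₃ hU₃) hne (hFo U₁ hU₁) hwb
  exact ⟨∅, hU₃, empty_subset U⟩

theorem mem_OWFClass : OWFClass Johnstone inferInstance :=
  ⟨inferInstance, openWellFiltered⟩

end Johnstone

/-- the category of open well-filtered spaces is not reflective in Top₀. -/
theorem statement19 : ¬ IsReflective OWFClass := by
  intro hrefl
  obtain ⟨R, tR, μ, hμ⟩ := hrefl (CofiniteTopology ℕ) inferInstance inferInstance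
  obtain ⟨z, hz⟩ := hμ.exists_forall_mem
  obtain ⟨g, ⟨hg, hgμ⟩, -⟩ :=
    hμ.2.2 Johnstone inferInstance Johnstone.mem_OWFClass _ Johnstone.continuous_top
  obtain ⟨n, hn⟩ := Johnstone.exists_top_not_le (g z)
  have hgμn : g (μ (CofiniteTopology.of n)) = Johnstone.top n :=
    (congrFun hgμ _).trans (by simp)
  exact hz _ ((Johnstone.isOpen_compl_Iic (g z)).preimage hg) ⟨_, hgμn ▸ hn⟩ self_mem_Iic
end
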